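/- arXiv:math/0505116 — 4 statements merged into one kernel-verified Lean document; each statement's English description precedes it below -/
import Mathlib

section
/- Let K be a field and D a division K-algebra such that the algebra D ⊗_K D^o is a Noetherian ring. Then D satisfies the ascending chain condition on division K-subalgebras: every ascending chain Γ₁ ⊆ Γ₂ ⊆ ⋯ of division K-subalgebras of D eventually stabilizes. -/
/-!
For a division subalgebra `Γ` of `D`, an element `x` lies in `Γ` exactly when `x ⊗ 1 - 1 ⊗ xᵒᵖ`
lies in the left ideal of `D ⊗[K] Dᵐᵒᵖ` generated by the `γ ⊗ 1 - 1 ⊗ γᵒᵖ` with `γ ∈ Γ`. Indeed `Γ`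
is a division ring, so `D` has a left `Γ`-linear retraction `p` onto `Γ`, and `a ⊗ b ↦ a * p b`
vanishes on that left ideal while sending `x ⊗ 1 - 1 ⊗ xᵒᵖ` to `x - p x`. Hence `Γ` is recovered
from its ideal, and an ascending chain of division subalgebras stabilizes together with the chain
of ideals in the Noetherian ring `D ⊗[K] Dᵐᵒᵖ`.
-/

open TensorProduct MulOpposite

def diffTmul (K : Type*) {D : Type*} [CommRing K] [Ring D] [Algebra K D] (x : D) :
    D ⊗[K] Dᵐᵒᵖ :=
  x ⊗ₜ 1 - 1 ⊗ₜ op x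

namespace Subalgebra

variable {K D : Type*} [Field K] [DivisionRing D] [Algebra K D]

noncomputable abbrev divisionRingOfInvMem (Γ : Subalgebra K D)
    (hinv : ∀ x ∈ Γ, x ≠ 0 → x⁻¹ ∈ Γ) : DivisionRing Γ :=
  DivisionRing.ofIsUnitOrEqZero fun a => or_iff_not_imp_right.2 fun ha =>
    have ha' : (a : D) ≠ 0 := by simpa using ha
    ⟨⟨a, ⟨_, hinv a a.2 ha'⟩, Subtype.ext (mul_inv_cancel₀ ha'),
      Subtype.ext (inv_mul_cancel₀ ha')⟩, rfl⟩

theorem exists_retraction_of_invMem (Γ : Subalgebra K D) (hinv : ∀ x ∈ Γ, x ≠ 0 → x⁻¹ ∈ Γ) :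
    ∃ p : D →ₗ[K] D, p 1 = 1 ∧ (∀ a, p a ∈ Γ) ∧ ∀ γ ∈ Γ, ∀ a, p (γ * a) = γ * p a := by
  let := Γ.divisionRingOfInvMem hinv
  obtain ⟨q, hq⟩ := (LinearMap.toSpanSingleton Γ D 1).exists_leftInverse_of_injective
    (LinearMap.ker_eq_bot.2 fun a b h => by simpa using h)
  refine ⟨Γ.val.toLinearMap ∘ₗ q.restrictScalars K, ?_, fun a => (q a).2, fun γ hγ a => ?_⟩
  · simpa using congrArg Subtype.val (LinearMap.congr_fun hq 1)
  · exact congrArg Subtype.val (q.map_smul ⟨γ, hγ⟩ a)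

def diffTmulIdeal (Γ : Subalgebra K D) : Submodule (D ⊗[K] Dᵐᵒᵖ) (D ⊗[K] Dᵐᵒᵖ) :=
  Submodule.span _ (diffTmul K '' Γ)

theorem diffTmulIdeal_mono : Monotone (diffTmulIdeal (K := K) (D := D)) :=
  fun _ _ h => Submodule.span_mono (Set.image_mono h)

theorem diffTmul_mem_diffTmulIdeal_iff {Γ : Subalgebra K D} (hinv : ∀ x ∈ Γ, x ≠ 0 → x⁻¹ ∈ Γ)
    {x : D} : diffTmul K x ∈ Γ.diffTmulIdeal ↔ x ∈ Γ := by
  refine ⟨fun hx => ?_, fun hx => Submodule.subset_span ⟨x, hx, rfl⟩⟩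
  obtain ⟨p, hp_one, hp_mem, hp_mul⟩ := Γ.exists_retraction_of_invMem hinv
  let Φ : D ⊗[K] Dᵐᵒᵖ →ₗ[K] D :=
    LinearMap.mul' K D ∘ₗ TensorProduct.map LinearMap.id (p ∘ₗ (opLinearEquiv K).symm.toLinearMap)
  have hΦ (a : D) (b : Dᵐᵒᵖ) : Φ (a ⊗ₜ b) = a * p b.unop := rfl
  have hΦ_ideal : ∀ m ∈ Γ.diffTmulIdeal, ∀ r, Φ (r * m) = 0 := by
    intro m hm
    induction hm using Submodule.span_induction with
    | mem _ hγ =>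
      obtain ⟨γ, hγ, rfl⟩ := hγ
      intro r
      induction r using TensorProduct.induction_on with
      | zero => rw [zero_mul, map_zero]
      | tmul a b =>
        simp only [diffTmul, mul_sub, Algebra.TensorProduct.tmul_mul_tmul, mul_one,
          map_sub, hΦ, MulOpposite.unop_mul, MulOpposite.unop_op, hp_mul γ hγ, mul_assoc, sub_self]
      | add r s hr hs => rw [add_mul, map_add, hr, hs, add_zero]
    | zero => intro r; rw [mul_zero, map_zero]
    | add m m' _ _ hm hm' => intro r; rw [mul_add, map_add, hm, hm', add_zero]
    | smul c m _ hm => intro r; rw [smul_eq_mul, ← mul_assoc]; exact hm _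
  have hx' : x - p x = 0 := by
    simpa [diffTmul, hΦ, hp_one] using hΦ_ideal _ hx 1
  exact sub_eq_zero.1 hx' ▸ hp_mem x

end Subalgebra

/-- If `D` is a division `K`-algebra with `D ⊗[K] Dᵐᵒᵖ` a Noetherian ring,
then `D` satisfies the ascending chain condition on division `K`-subalgebras. -/
theorem stmt0 (K D : Type*) [Field K] [DivisionRing D] [Algebra K D]
    (hNoeth : IsNoetherianRing (D ⊗[K] Dᵐᵒᵖ))
    (Γ : ℕ → Subalgebra K D)
    (hdiv : ∀ n, ∀ x ∈ Γ n, x ≠ 0 → x⁻¹ ∈ Γ n)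
    (hchain : ∀ n, Γ n ≤ Γ (n + 1)) :
    ∃ N : ℕ, ∀ n : ℕ, N ≤ n → Γ n = Γ N := by
  have hΓ : Monotone Γ := monotone_nat_of_le_succ hchain
  obtain ⟨N, hN⟩ := monotone_stabilizes_iff_noetherian.2 hNoeth
    ⟨fun n => (Γ n).diffTmulIdeal, Subalgebra.diffTmulIdeal_mono.comp hΓ⟩
  refine ⟨N, fun n hn => le_antisymm (fun x hx => ?_) (hΓ hn)⟩
  have hIdeal : (Γ n).diffTmulIdeal = (Γ N).diffTmulIdeal := (hN n hn).symm
  rwa [← Subalgebra.diffTmul_mem_diffTmulIdeal_iff (hdiv N), ← hIdeal,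
    Subalgebra.diffTmul_mem_diffTmulIdeal_iff (hdiv n)]
end

section
/- Let K be a field and D a division K-algebra such that the algebra D ⊗_K D^o is a Noetherian ring. Then every division K-subalgebra Γ of D is a finitely generated division K-algebra: there exists a finite subset S of Γ such that the only division K-subalgebra of D containing S and contained in Γ is Γ itself. -/
/-!
For a division subalgebra `Γ` of `D`, let `J Γ` be the left ideal of `D ⊗[K] Dᵐᵒᵖ` generated by the
elements `x ⊗ 1 - 1 ⊗ xᵒᵖ` with `x ∈ Γ`. A left `Γ`-linear retraction `π : D → Γ` with `π 1 = 1`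
gives a map `a ⊗ bᵒᵖ ↦ a π(b)` killing `J Γ`, so `x ⊗ 1 - 1 ⊗ xᵒᵖ ∈ J Γ` forces `x = π x ∈ Γ`.
Hence `Γ` is recovered from `J Γ`, and a finite generating set of `J Γ` (Noetherianity) chosen
among these generators is a finite set generating `Γ` as a division algebra.
-/

open TensorProduct

theorem Subfield.exists_linearMap_retraction {D : Type*} [DivisionRing D] (F : Subfield D) :
    ∃ π : D →ₗ[F] D, π 1 = 1 ∧ ∀ d, π d ∈ F := by
  obtain ⟨ρ, hρ⟩ := LinearMap.exists_leftInverse_of_injective (LinearMap.toSpanSingleton F D 1)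
    (LinearMap.ker_eq_bot.2 fun a b h => by simpa using h)
  refine ⟨(LinearMap.toSpanSingleton F D 1) ∘ₗ ρ, ?_, fun d => by simp [Subfield.smul_def]⟩
  simpa [Subfield.smul_def] using congr_arg Subtype.val (LinearMap.congr_fun hρ 1)

theorem Submodule.exists_finset_subset_span_image_eq {R M α : Type*} [Semiring R]
    [AddCommMonoid M] [Module R M] [IsNoetherian R M] (f : α → M) (s : Set α) :
    ∃ t : Finset α, ↑t ⊆ s ∧ span R (f '' s) = span R (f '' t) := by
  classical
  obtain ⟨u, hus, hu⟩ :=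
    (fg_span_iff_fg_span_finset_subset (f '' s)).1 (IsNoetherian.noetherian (span R (f '' s)))
  obtain ⟨t, hts, rfl⟩ := Finset.subset_set_image_iff.1 hus
  exact ⟨t, hts, by rwa [Finset.coe_image] at hu⟩

namespace Subalgebra

variable {K D : Type*} [Field K] [DivisionRing D] [Algebra K D]

def toSubfieldOfInvMem (Γ : Subalgebra K D) (hΓ : ∀ x ∈ Γ, x ≠ 0 → x⁻¹ ∈ Γ) : Subfield D where
  toSubring := Γ.toSubring
  inv_mem' x hx := by
    rcases eq_or_ne x 0 with rfl | hx0
    · simp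
    · exact hΓ x hx hx0

theorem exists_linearMap_retraction (Γ : Subalgebra K D) (hΓ : ∀ x ∈ Γ, x ≠ 0 → x⁻¹ ∈ Γ) :
    ∃ π : D →ₗ[K] D, π 1 = 1 ∧ (∀ d, π d ∈ Γ) ∧ ∀ γ ∈ Γ, ∀ d, π (γ * d) = γ * π d := by
  let F := Γ.toSubfieldOfInvMem hΓ
  obtain ⟨π, hπ1, hπF⟩ := F.exists_linearMap_retraction
  have hπ : ∀ γ ∈ Γ, ∀ d, π (γ * d) = γ * π d := fun γ hγ d => π.map_smul (⟨γ, hγ⟩ : F) d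
  refine ⟨⟨⟨π, π.map_add⟩, fun k d => ?_⟩, hπ1, hπF, hπ⟩
  simpa [Algebra.smul_def] using hπ _ (Γ.algebraMap_mem k) d

end Subalgebra

section TensorOpposite

variable (K : Type*) {D : Type*} [Field K] [DivisionRing D] [Algebra K D]

def tmulOneSubOneTmulOp (x : D) : D ⊗[K] Dᵐᵒᵖ := x ⊗ₜ 1 - 1 ⊗ₜ MulOpposite.op x

variable {K}

theorem mem_of_tmulOneSubOneTmulOp_mem_span (Γ : Subalgebra K D)
    (hΓ : ∀ x ∈ Γ, x ≠ 0 → x⁻¹ ∈ Γ) {x : D}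
    (hx : tmulOneSubOneTmulOp K x ∈
      Submodule.span (D ⊗[K] Dᵐᵒᵖ) (tmulOneSubOneTmulOp K '' (Γ : Set D))) :
    x ∈ Γ := by
  obtain ⟨π, hπ1, hπΓ, hπ⟩ := Γ.exists_linearMap_retraction hΓ
  let Φ : D ⊗[K] Dᵐᵒᵖ →ₗ[K] D :=
    lift ((LinearMap.mul K D).compl₂ (π ∘ₗ (MulOpposite.opLinearEquiv K).symm.toLinearMap))
  have hΦ : ∀ (a : D) (b : Dᵐᵒᵖ), Φ (a ⊗ₜ b) = a * π b.unop := fun _ _ => rfl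
  have hspan : ∀ t ∈ Submodule.span (D ⊗[K] Dᵐᵒᵖ) (tmulOneSubOneTmulOp K '' (Γ : Set D)),
      ∀ r, Φ (r * t) = 0 := by
    intro t ht
    induction ht using Submodule.span_induction with
    | mem t ht =>
      obtain ⟨y, hy, rfl⟩ := ht
      intro r
      induction r using TensorProduct.induction_on with
      | zero => simp
      | tmul a b =>
        simp [tmulOneSubOneTmulOp, mul_sub, hΦ, hπ y hy, mul_assoc]
      | add r₁ r₂ h₁ h₂ => rw [add_mul, map_add, h₁, h₂, add_zero]
    | zero => simp
    | add s t _ _ hs ht => intro r; rw [mul_add, map_add, hs, ht, add_zero]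
    | smul c t _ ht => intro r; rw [smul_eq_mul, ← mul_assoc]; exact ht _
  have hxπ : x - π x = 0 := by simpa [tmulOneSubOneTmulOp, hΦ, hπ1] using hspan _ hx 1
  rw [sub_eq_zero.1 hxπ]
  exact hπΓ x

end TensorOpposite

theorem stmt1_general (K D : Type*) [Field K] [DivisionRing D] [Algebra K D]
    (hNoeth : IsNoetherianRing (D ⊗[K] Dᵐᵒᵖ))
    (Γ : Subalgebra K D) :
    ∃ S : Finset D, (S : Set D) ⊆ (Γ : Set D) ∧
      ∀ Γ' : Subalgebra K D, (∀ x ∈ Γ', x ≠ 0 → x⁻¹ ∈ Γ') →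
        (S : Set D) ⊆ (Γ' : Set D) → Γ' ≤ Γ → Γ' = Γ := by
  obtain ⟨S, hSΓ, hspan⟩ :=
    Submodule.exists_finset_subset_span_image_eq (R := D ⊗[K] Dᵐᵒᵖ) (tmulOneSubOneTmulOp K) (Γ : Set D)
  refine ⟨S, hSΓ, fun Γ' hΓ' hSΓ' hle => le_antisymm hle fun x hx => ?_⟩
  refine mem_of_tmulOneSubOneTmulOp_mem_span Γ' hΓ' ?_
  have hxS := hspan ▸ Submodule.subset_span (Set.mem_image_of_mem _ hx)
  exact Submodule.span_mono (Set.image_mono hSΓ') hxS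

/-- If `D` is a division `K`-algebra with `D ⊗[K] Dᵐᵒᵖ` a Noetherian ring,
then every division `K`-subalgebra `Γ` of `D` is a finitely generated division algebra:
some finite subset `S` of `Γ` is contained in no division `K`-subalgebra of `D` that is
properly contained in `Γ`. -/
theorem stmt1 (K D : Type*) [Field K] [DivisionRing D] [Algebra K D]
    (hNoeth : IsNoetherianRing (D ⊗[K] Dᵐᵒᵖ))
    (Γ : Subalgebra K D) (hΓ : ∀ x ∈ Γ, x ≠ 0 → x⁻¹ ∈ Γ) :
    ∃ S : Finset D, (S : Set D) ⊆ (Γ : Set D) ∧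
      ∀ Γ' : Subalgebra K D, (∀ x ∈ Γ', x ≠ 0 → x⁻¹ ∈ Γ') →
        (S : Set D) ⊆ (Γ' : Set D) → Γ' ≤ Γ → Γ' = Γ :=
  stmt1_general K D hNoeth Γ
end

section
/- Let K be a field, D a division K-algebra such that D ⊗_K D^o is a Noetherian ring, and δ₁, …, δ_t pairwise commuting K-derivations of D. Then the set Ev(Δ) := { λ = (λ₁,…,λ_t) ∈ K^t : there exists u ∈ D, u ≠ 0, with δᵢ(u) = λᵢ·u for all i = 1,…,t } is an additive subgroup of K^t and is a finitely generated abelian group. -/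
/-!
Products and inverses of joint eigenvectors are joint eigenvectors (Leibniz rule), so the joint
eigenvalues form a group `Ev`. For a subgroup `H`, let `B_H` be the sum of the joint eigenspaces
with eigenvalues in `H` and `J_H` the left ideal of `D ⊗ Dᵐᵒᵖ` generated by the `x ⊗ 1 - 1 ⊗ op x`,
`x ∈ B_H`. Every joint eigenspace is at most one-dimensional over the division ring of constants,
so finitely generated pieces of `B_H` grow polynomially over it; hence `B_H` is a left Ore domain
and its left fractions form a division subalgebra `E_H`. Joint eigenspaces are independent, so an
eigenvector `v` with eigenvalue outside `H` is not in `E_H`, and a left `E_H`-linear coordinate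
function on `D` separates `v ⊗ 1 - 1 ⊗ op v` from `J_H`. Thus `J_H` grows strictly whenever a new
eigenvalue is added to `H`, and since `D ⊗ Dᵐᵒᵖ` is Noetherian, `Ev` is finitely generated.
-/

open TensorProduct MulOpposite Module Pointwise

theorem exists_lt_two_mul_of_le_pow {d : ℕ → ℕ} {r : ℕ} (h0 : d 0 ≠ 0)
    (hd : ∀ n, d n ≤ (n + 1) ^ r) : ∃ n, d (n + 1) < 2 * d n := by
  by_contra! hdouble
  have hexp (n : ℕ) : 2 ^ n ≤ d n := by
    induction n with
    | zero => simpa [Nat.one_le_iff_ne_zero] using h0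
    | succ n ih => rw [pow_succ']; exact (Nat.mul_le_mul_left 2 ih).trans (hdouble n)
  have hlim := (tendsto_pow_const_div_const_pow_of_one_lt r (one_lt_two (α := ℝ))).comp
    (Filter.tendsto_add_atTop_nat 1)
  obtain ⟨n, hn⟩ := (hlim.eventually (gt_mem_nhds one_half_pos)).exists
  rw [Function.comp_apply, div_lt_iff₀ (by positivity), pow_succ] at hn
  have : (2 : ℝ) ^ n ≤ ((n : ℝ) + 1) ^ r := by exact_mod_cast (hexp n).trans (hd n)
  push_cast at hn
  linarith

section BoxSums

variable {A : Type*} [AddCommMonoid A] [DecidableEq A]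

def boxSums (T : Finset A) (n : ℕ) : Finset A :=
  (Fintype.piFinset fun _ : T => Finset.range (n + 1)).image fun k => ∑ x : T, k x • (x : A)

theorem card_boxSums_le (T : Finset A) (n : ℕ) : (boxSums T n).card ≤ (n + 1) ^ T.card :=
  Finset.card_image_le.trans (by simp)

theorem zero_mem_boxSums (T : Finset A) : (0 : A) ∈ boxSums T 0 :=
  Finset.mem_image.2 ⟨fun _ => 0, by simp, by simp⟩

theorem add_mem_boxSums_succ {T : Finset A} {n : ℕ} {a b : A} (ha : a ∈ boxSums T n)
    (hb : b ∈ T) : a + b ∈ boxSums T (n + 1) := by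
  classical
  obtain ⟨k, hk, rfl⟩ := Finset.mem_image.1 ha
  refine Finset.mem_image.2 ⟨k + Pi.single ⟨b, hb⟩ 1, ?_, ?_⟩
  · simp only [Fintype.mem_piFinset, Finset.mem_range] at hk ⊢
    intro x
    have := hk x
    simp only [Pi.add_apply, Pi.single_apply]
    split_ifs <;> omega
  · simp [add_smul, Finset.sum_add_distrib, Pi.single_apply, ite_smul]

theorem add_subset_boxSums_succ (T : Finset A) (n : ℕ) :
    (boxSums T n : Set A) + (T : Set A) ⊆ boxSums T (n + 1) :=
  Set.add_subset_iff.2 fun _ ha _ hb => add_mem_boxSums_succ ha hb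

theorem boxSums_subset_closure (T : Finset A) (n : ℕ) :
    (boxSums T n : Set A) ⊆ AddSubmonoid.closure (T : Set A) := by
  intro a ha
  obtain ⟨k, -, rfl⟩ := Finset.mem_image.1 ha
  exact AddSubmonoid.sum_mem _ fun x _ =>
    AddSubmonoid.nsmul_mem _ (AddSubmonoid.subset_closure x.2) _

end BoxSums

theorem AddSubgroup.fg_of_lt_sup_zmultiples {A α : Type*} [AddCommGroup A] [Preorder α]
    [WellFoundedGT α] (G : AddSubgroup A) (J : AddSubgroup A → α)
    (hJ : ∀ H ≤ G, H.FG → ∀ μ ∈ G, μ ∉ H → J H < J (H ⊔ AddSubgroup.zmultiples μ)) : G.FG := by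
  obtain ⟨_, ⟨H, ⟨hHG, hH⟩, rfl⟩, hmax⟩ := wellFounded_gt.has_min
    (J '' {H | H ≤ G ∧ H.FG}) ⟨J ⊥, ⊥, ⟨bot_le, AddSubgroup.FG.bot⟩, rfl⟩
  suffices G ≤ H from le_antisymm hHG this ▸ hH
  intro μ hμ
  by_contra hμH
  have hfg : (AddSubgroup.zmultiples μ).FG :=
    ⟨{μ}, by rw [Finset.coe_singleton, AddSubgroup.zmultiples_eq_closure]⟩
  exact hmax _ ⟨_, ⟨sup_le hHG (AddSubgroup.zmultiples_le.2 hμ), hH.sup hfg⟩, rfl⟩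
    (hJ H hHG hH μ hμ hμH)

section LeftFractions

variable {K D : Type*} [Field K] [DivisionRing D] [Algebra K D]

noncomputable abbrev Subalgebra.divisionRingOfInvMem_s2 (E : Subalgebra K D)
    (hE : ∀ x ∈ E, x⁻¹ ∈ E) : DivisionRing E :=
  DivisionRing.ofIsUnitOrEqZero fun a => or_iff_not_imp_right.2 fun ha =>
    have ha' : (a : D) ≠ 0 := fun h => ha (Subtype.ext h)
    ⟨⟨a, ⟨_, hE _ a.2⟩, Subtype.ext (mul_inv_cancel₀ ha'), Subtype.ext (inv_mul_cancel₀ ha')⟩, rfl⟩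

def Subalgebra.IsLeftOre (B : Subalgebra K D) : Prop :=
  ∀ g ∈ B, ∀ h ∈ B, h ≠ 0 → ∃ a ∈ B, ∃ b ∈ B, a ≠ 0 ∧ a * g = b * h

def Subalgebra.leftFractions (B : Subalgebra K D) (hB : B.IsLeftOre) : Subalgebra K D where
  carrier := {x | ∃ g ∈ B, g ≠ 0 ∧ g * x ∈ B}
  mul_mem' := by
    rintro x y ⟨g, hg, hg0, hgx⟩ ⟨h, hh, hh0, hhy⟩
    obtain ⟨a, ha, b, hb, ha0, hab⟩ := hB _ hgx h hh hh0
    refine ⟨a * g, B.mul_mem ha hg, mul_ne_zero ha0 hg0, ?_⟩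
    rw [show a * g * (x * y) = b * (h * y) by rw [← mul_assoc b, ← hab]; simp only [mul_assoc]]
    exact B.mul_mem hb hhy
  add_mem' := by
    rintro x y ⟨g, hg, hg0, hgx⟩ ⟨h, hh, hh0, hhy⟩
    obtain ⟨a, ha, b, hb, ha0, hab⟩ := hB g hg h hh hh0
    refine ⟨a * g, B.mul_mem ha hg, mul_ne_zero ha0 hg0, ?_⟩
    rw [mul_add, mul_assoc a g x, hab, mul_assoc]
    exact B.add_mem (B.mul_mem ha hgx) (B.mul_mem hb hhy)
  algebraMap_mem' k := ⟨1, B.one_mem, one_ne_zero, by rw [one_mul]; exact B.algebraMap_mem k⟩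

variable {B : Subalgebra K D} {hB : B.IsLeftOre}

theorem Subalgebra.le_leftFractions : B ≤ B.leftFractions hB :=
  fun _ hx => ⟨1, B.one_mem, one_ne_zero, by rwa [one_mul]⟩

theorem Subalgebra.inv_mem_leftFractions {x : D} (hx : x ∈ B.leftFractions hB) :
    x⁻¹ ∈ B.leftFractions hB := by
  obtain rfl | hx0 := eq_or_ne x 0
  · simp
  obtain ⟨g, hg, hg0, hgx⟩ := hx
  exact ⟨g * x, hgx, mul_ne_zero hg0 hx0, by rwa [mul_assoc, mul_inv_cancel₀ hx0, mul_one]⟩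

end LeftFractions

section DiagonalLeftIdeal

variable (K : Type*) {D : Type*} [Field K] [DivisionRing D] [Algebra K D]

def diagonalLeftIdeal (S : Set D) : Submodule (D ⊗[K] Dᵐᵒᵖ) (D ⊗[K] Dᵐᵒᵖ) :=
  Submodule.span _ ((fun x => x ⊗ₜ[K] 1 - 1 ⊗ₜ[K] op x) '' S)

variable {K}

theorem diagonalLeftIdeal_mono {S T : Set D} (h : S ⊆ T) :
    diagonalLeftIdeal K S ≤ diagonalLeftIdeal K T :=
  Submodule.span_mono (Set.image_mono h)

theorem tmul_one_sub_one_tmul_mem_diagonalLeftIdeal {S : Set D} {x : D} (hx : x ∈ S) :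
    x ⊗ₜ[K] 1 - 1 ⊗ₜ[K] op x ∈ diagonalLeftIdeal K S :=
  Submodule.subset_span ⟨x, hx, rfl⟩

theorem tmul_one_sub_one_tmul_notMem_diagonalLeftIdeal {S : Set D} (f : D →ₗ[K] D)
    (hf : ∀ x ∈ S, ∀ y, f (x * y) = x * f y) {u : D} (hu : u * f 1 ≠ f u) :
    u ⊗ₜ[K] 1 - 1 ⊗ₜ[K] op u ∉ diagonalLeftIdeal K S := by
  let Φ : D ⊗[K] Dᵐᵒᵖ →ₗ[K] D :=
    LinearMap.mul' K D ∘ₗ TensorProduct.map LinearMap.id (f ∘ₗ (opLinearEquiv K).symm.toLinearMap)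
  have hΦ (d : D) (e : Dᵐᵒᵖ) : Φ (d ⊗ₜ e) = d * f (unop e) := rfl
  -- `Φ` is not `D ⊗ Dᵐᵒᵖ`-linear, so the induction has to carry all left multiples `r * z`
  suffices h : ∀ z ∈ diagonalLeftIdeal K S, ∀ r, Φ (r * z) = 0 by
    intro hmem
    apply hu
    simpa [hΦ, sub_eq_zero] using h _ hmem 1
  intro z hz
  induction hz using Submodule.span_induction with
  | mem z hz =>
    obtain ⟨x, hx, rfl⟩ := hz
    intro r
    induction r using TensorProduct.induction_on with
    | zero => simp
    | tmul d e =>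
      simp only [mul_sub, Algebra.TensorProduct.tmul_mul_tmul, map_sub, mul_one, hΦ, unop_mul,
        unop_op, hf x hx, mul_assoc, sub_self]
    | add r s hr hs => rw [add_mul, map_add, hr, hs, add_zero]
  | zero => simp
  | add z w _ _ hz hw => intro r; rw [mul_add, map_add, hz, hw, add_zero]
  | smul c z _ hz => intro r; rw [smul_eq_mul, ← mul_assoc]; exact hz _

theorem Subalgebra.exists_linearMap_of_notMem (E : Subalgebra K D) (hE : ∀ x ∈ E, x⁻¹ ∈ E)
    {u : D} (hu : u ∉ E) :
    ∃ f : D →ₗ[K] D, (∀ x ∈ E, ∀ y, f (x * y) = x * f y) ∧ u * f 1 ≠ f u := by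
  let := E.divisionRingOfInvMem_s2 hE
  have h1 : (1 : D) ∉ Submodule.span E {u} := by
    intro h
    obtain ⟨c, hc⟩ := Submodule.mem_span_singleton.1 h
    exact hu ((inv_eq_of_mul_eq_one_right hc).symm ▸ hE _ c.2)
  obtain ⟨φ, hφ1, hφu⟩ := Submodule.exists_dual_map_eq_bot_of_notMem h1 inferInstance
  refine ⟨E.val.toLinearMap ∘ₗ φ.restrictScalars K, fun x hx y => ?_, ?_⟩
  · exact congrArg Subtype.val (φ.map_smul ⟨x, hx⟩ y)
  · have hφu : φ u = 0 :=
      (Submodule.mem_bot E).1 (hφu ▸ Submodule.mem_map_of_mem (Submodule.mem_span_singleton_self u))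
    have hu0 : u ≠ 0 := fun h => hu (h ▸ E.zero_mem)
    simpa [hφu] using mul_ne_zero hu0 (Subtype.coe_ne_coe.2 hφ1)

end DiagonalLeftIdeal

section JointEigenspace

variable {K D ι : Type*} [Field K] [DivisionRing D] [Algebra K D] (δ : ι → Module.End K D)

def jointEigenspace (χ : ι → K) : Submodule K D := ⨅ i, (δ i).eigenspace (χ i)

variable {δ}

theorem mem_jointEigenspace {χ : ι → K} {x : D} :
    x ∈ jointEigenspace δ χ ↔ ∀ i, δ i x = χ i • x := by
  simp [jointEigenspace]

theorem iSupIndep_jointEigenspace (hδ : ∀ i j, Commute (δ i) (δ j)) :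
    iSupIndep (jointEigenspace δ) :=
  (Module.End.independent_iInf_maxGenEigenspace_of_forall_mapsTo δ fun i j _ =>
    Module.End.mapsTo_maxGenEigenspace_of_comm (hδ j i) _).mono fun _ =>
      iInf_mono fun _ => Module.End.eigenspace_le_maxGenEigenspace

variable (hδ : ∀ i a b, δ i (a * b) = δ i a * b + a * δ i b)
include hδ

theorem one_mem_jointEigenspace_zero : (1 : D) ∈ jointEigenspace δ 0 :=
  mem_jointEigenspace.2 fun i => by simpa using hδ i 1 1

theorem mul_mem_jointEigenspace {χ ψ : ι → K} {x y : D} (hx : x ∈ jointEigenspace δ χ)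
    (hy : y ∈ jointEigenspace δ ψ) : x * y ∈ jointEigenspace δ (χ + ψ) :=
  mem_jointEigenspace.2 fun i => by
    rw [hδ, mem_jointEigenspace.1 hx, mem_jointEigenspace.1 hy, Pi.add_apply, add_smul,
      smul_mul_assoc, mul_smul_comm]

theorem inv_mem_jointEigenspace {χ : ι → K} {x : D} (hx : x ∈ jointEigenspace δ χ) :
    x⁻¹ ∈ jointEigenspace δ (-χ) := by
  obtain rfl | hx0 := eq_or_ne x 0
  · simp
  refine mem_jointEigenspace.2 fun i => ?_
  have h := hδ i x x⁻¹
  rw [mul_inv_cancel₀ hx0, mem_jointEigenspace.1 (one_mem_jointEigenspace_zero hδ) i,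
    mem_jointEigenspace.1 hx, smul_mul_assoc, mul_inv_cancel₀ hx0, Pi.zero_apply, zero_smul,
    eq_comm, add_eq_zero_iff_eq_neg'] at h
  calc δ i x⁻¹ = x⁻¹ * (x * δ i x⁻¹) := by rw [← mul_assoc, inv_mul_cancel₀ hx0, one_mul]
    _ = (-χ) i • x⁻¹ := by rw [h]; simp

theorem exists_forall_mem_jointEigenspace_eq_mul (χ : ι → K) :
    ∃ u : D, ∀ x ∈ jointEigenspace δ χ, ∃ c ∈ jointEigenspace δ 0, x = c * u := by
  by_cases h : ∃ u ∈ jointEigenspace δ χ, u ≠ 0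
  · obtain ⟨u, hu, hu0⟩ := h
    refine ⟨u, fun x hx => ⟨x * u⁻¹, ?_, by rw [mul_assoc, inv_mul_cancel₀ hu0, mul_one]⟩⟩
    simpa using mul_mem_jointEigenspace hδ hx (inv_mem_jointEigenspace hδ hu)
  · push Not at h
    exact ⟨0, fun x hx => ⟨0, Submodule.zero_mem _, by simp [h x hx]⟩⟩

def jointEigenvalues : AddSubgroup (ι → K) where
  carrier := {χ | ∃ u ≠ 0, u ∈ jointEigenspace δ χ}
  add_mem' := by
    rintro χ ψ ⟨u, hu0, hu⟩ ⟨v, hv0, hv⟩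
    exact ⟨u * v, mul_ne_zero hu0 hv0, mul_mem_jointEigenspace hδ hu hv⟩
  zero_mem' := ⟨1, one_ne_zero, one_mem_jointEigenspace_zero hδ⟩
  neg_mem' := by
    rintro χ ⟨u, hu0, hu⟩
    exact ⟨u⁻¹, inv_ne_zero hu0, inv_mem_jointEigenspace hδ hu⟩

def constantSubalgebra : Subalgebra K D :=
  (jointEigenspace δ 0).toSubalgebra (one_mem_jointEigenspace_zero hδ) fun _ _ hx hy => by
    simpa using mul_mem_jointEigenspace hδ hx hy

theorem mem_constantSubalgebra {x : D} :
    x ∈ constantSubalgebra hδ ↔ x ∈ jointEigenspace δ 0 :=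
  Iff.rfl

noncomputable instance : DivisionRing (constantSubalgebra hδ) :=
  (constantSubalgebra hδ).divisionRingOfInvMem_s2 fun _ hx => by
    simpa [mem_constantSubalgebra] using inv_mem_jointEigenspace hδ hx

end JointEigenspace

section EigenSpan

variable {K D ι : Type*} [Field K] [DivisionRing D] [Algebra K D] (δ : ι → Module.End K D)

def eigenSpan (S : Set (ι → K)) : Submodule K D := ⨆ χ ∈ S, jointEigenspace δ χ

variable {δ}

theorem jointEigenspace_le_eigenSpan {S : Set (ι → K)} {χ : ι → K} (hχ : χ ∈ S) :
    jointEigenspace δ χ ≤ eigenSpan δ S :=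
  le_biSup (jointEigenspace δ) hχ

theorem eigenSpan_mono {S T : Set (ι → K)} (h : S ⊆ T) : eigenSpan δ S ≤ eigenSpan δ T :=
  biSup_mono h

theorem exists_finset_of_mem_eigenSpan {S : Set (ι → K)} {x : D} (hx : x ∈ eigenSpan δ S) :
    ∃ T : Finset (ι → K), ↑T ⊆ S ∧ x ∈ eigenSpan δ ↑T := by
  classical
  obtain ⟨T, hT⟩ := Submodule.mem_iSup_iff_exists_finset.1 hx
  refine ⟨T.filter (· ∈ S), fun χ hχ => (Finset.mem_filter.1 hχ).2, ?_⟩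
  refine (iSup₂_le fun χ hχT => iSup_le fun hχS => ?_ : _ ≤ eigenSpan δ _) hT
  exact jointEigenspace_le_eigenSpan (Finset.mem_filter.2 ⟨hχT, hχS⟩)

theorem disjoint_eigenSpan (hδ : ∀ i j, Commute (δ i) (δ j)) {S T : Set (ι → K)}
    (h : Disjoint S T) : Disjoint (eigenSpan δ S) (eigenSpan δ T) :=
  (iSupIndep_jointEigenspace hδ).disjoint_biSup_biSup h

variable (hδ : ∀ i a b, δ i (a * b) = δ i a * b + a * δ i b)
include hδ

theorem eigenSpan_mul_le (S T : Set (ι → K)) :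
    eigenSpan δ S * eigenSpan δ T ≤ eigenSpan δ (S + T) := by
  simp only [eigenSpan, Submodule.iSup_mul]
  refine iSup₂_le fun χ hχ => ?_
  simp only [Submodule.mul_iSup]
  refine iSup₂_le fun ψ hψ => Submodule.mul_le.2 fun x hx y hy => ?_
  exact jointEigenspace_le_eigenSpan (Set.add_mem_add hχ hψ) (mul_mem_jointEigenspace hδ hx hy)

theorem mul_mem_eigenSpan {S T : Set (ι → K)} {x y : D} (hx : x ∈ eigenSpan δ S)
    (hy : y ∈ eigenSpan δ T) : x * y ∈ eigenSpan δ (S + T) :=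
  eigenSpan_mul_le hδ S T (Submodule.mul_mem_mul hx hy)

def eigenSubalgebra (H : AddSubgroup (ι → K)) : Subalgebra K D :=
  (eigenSpan δ H).toSubalgebra (jointEigenspace_le_eigenSpan H.zero_mem
    (one_mem_jointEigenspace_zero hδ)) fun _ _ hx hy =>
      eigenSpan_mono (Set.add_subset_iff.2 fun _ ha _ hb => H.add_mem ha hb)
        (mul_mem_eigenSpan hδ hx hy)

def eigenSpanOverConstants (S : Set (ι → K)) : Submodule (constantSubalgebra hδ) D where
  __ := (eigenSpan δ S).toAddSubmonoid
  smul_mem' c x hx := by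
    simpa [Subalgebra.smul_def] using
      mul_mem_eigenSpan hδ (jointEigenspace_le_eigenSpan (Set.mem_singleton 0) c.2) hx

theorem exists_eigenSpanOverConstants_le_span (T : Finset (ι → K)) :
    ∃ s : Finset D, s.card ≤ T.card ∧
      eigenSpanOverConstants hδ T ≤ Submodule.span (constantSubalgebra hδ) ↑s := by
  classical
  choose u hu using exists_forall_mem_jointEigenspace_eq_mul hδ (δ := δ)
  refine ⟨T.image u, Finset.card_image_le, fun x hx => ?_⟩
  refine (iSup₂_le fun χ hχ y hy => ?_ : eigenSpan δ T ≤
    (Submodule.span (constantSubalgebra hδ) ↑(T.image u)).restrictScalars K) hx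
  obtain ⟨c, hc, rfl⟩ := hu χ y hy
  exact Submodule.smul_mem _ (⟨c, hc⟩ : constantSubalgebra hδ)
    (Submodule.subset_span (Finset.mem_image_of_mem u hχ))

theorem exists_mul_eq_mul_of_mem_eigenSpan (T : Finset (ι → K)) {g h : D}
    (hg : g ∈ eigenSpan δ T) (hh : h ∈ eigenSpan δ T) (hh0 : h ≠ 0) :
    ∃ a ∈ eigenSpan δ (AddSubmonoid.closure (T : Set (ι → K))),
      ∃ b ∈ eigenSpan δ (AddSubmonoid.closure (T : Set (ι → K))), a ≠ 0 ∧ a * g = b * h := by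
  classical
  let V (n : ℕ) := eigenSpanOverConstants hδ (boxSums T n : Set (ι → K))
  have hV (n : ℕ) : FiniteDimensional (constantSubalgebra hδ) (V n) ∧
      finrank (constantSubalgebra hδ) (V n) ≤ (n + 1) ^ T.card := by
    obtain ⟨s, hs, hle⟩ := exists_eigenSpanOverConstants_le_span hδ (boxSums T n)
    exact ⟨Submodule.finiteDimensional_of_le hle, (Submodule.finrank_mono hle).trans <|
      (finrank_span_finset_le_card s).trans <| hs.trans (card_boxSums_le T n)⟩
  have hV0 : finrank (constantSubalgebra hδ) (V 0) ≠ 0 := by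
    have := (hV 0).1
    exact Submodule.finrank_eq_zero.not.2 ((Submodule.ne_bot_iff _).2 ⟨1,
      jointEigenspace_le_eigenSpan (zero_mem_boxSums T) (one_mem_jointEigenspace_zero hδ),
      one_ne_zero⟩)
  obtain ⟨n, hn⟩ := exists_lt_two_mul_of_le_pow hV0 fun n => (hV n).2
  have hmul {x y : D} (hx : x ∈ V n) (hy : y ∈ eigenSpan δ T) : x * y ∈ V (n + 1) :=
    eigenSpan_mono (add_subset_boxSums_succ T n) (mul_mem_eigenSpan hδ hx hy)
  let Ψ : V n × V n →ₗ[constantSubalgebra hδ] V (n + 1) :=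
    { toFun p := ⟨p.1 * g - p.2 * h, (V (n + 1)).sub_mem (hmul p.1.2 hg) (hmul p.2.2 hh)⟩
      map_add' p q := by
        ext; simp only [Prod.fst_add, Prod.snd_add, Submodule.coe_add, add_mul]; abel
      map_smul' c p := by ext; simp [Subalgebra.smul_def, mul_sub, mul_assoc] }
  have := (hV n).1
  have := (hV (n + 1)).1
  obtain ⟨⟨a, b⟩, hker, hab0⟩ := (Submodule.ne_bot_iff _).1
    (LinearMap.ker_ne_bot_of_finrank_lt (f := Ψ) (by rw [finrank_prod]; omega))
  have hab : (a : D) * g = b * h := sub_eq_zero.1 congr(Subtype.val $(LinearMap.mem_ker.1 hker))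
  have ha0 : (a : D) ≠ 0 := by
    rintro ha
    refine hab0 (Prod.ext (Subtype.ext ha) (Subtype.ext ?_))
    simpa [ha, hh0] using hab.symm
  have hsub := eigenSpan_mono (δ := δ) (boxSums_subset_closure T n)
  exact ⟨a, hsub a.2, b, hsub b.2, ha0, hab⟩

theorem isLeftOre_eigenSubalgebra (H : AddSubgroup (ι → K)) :
    (eigenSubalgebra hδ H).IsLeftOre := by
  classical
  intro g hg h hh hh0
  obtain ⟨T₁, hT₁H, hgT₁⟩ := exists_finset_of_mem_eigenSpan hg
  obtain ⟨T₂, hT₂H, hhT₂⟩ := exists_finset_of_mem_eigenSpan hh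
  obtain ⟨a, ha, b, hb, ha0, hab⟩ := exists_mul_eq_mul_of_mem_eigenSpan hδ (T₁ ∪ T₂)
    (eigenSpan_mono Finset.subset_union_left hgT₁)
    (eigenSpan_mono Finset.subset_union_right hhT₂) hh0
  have hle : eigenSpan δ (AddSubmonoid.closure ((T₁ ∪ T₂ : Finset (ι → K)) : Set (ι → K))) ≤
      eigenSpan δ H :=
    eigenSpan_mono (AddSubmonoid.closure_le (S := H.toAddSubmonoid).2
      (by rw [Finset.coe_union]; exact Set.union_subset hT₁H hT₂H))
  exact ⟨a, hle ha, b, hle hb, ha0, hab⟩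

theorem notMem_leftFractions_eigenSubalgebra (hcomm : ∀ i j, Commute (δ i) (δ j))
    {H : AddSubgroup (ι → K)} {μ : ι → K} (hμ : μ ∉ H) {v : D} (hv : v ∈ jointEigenspace δ μ)
    (hv0 : v ≠ 0) : v ∉ (eigenSubalgebra hδ H).leftFractions (isLeftOre_eigenSubalgebra hδ H) := by
  rintro ⟨g, hg, hg0, hgv⟩
  have hdisj : Disjoint (H : Set (ι → K)) (H + {μ}) := by
    refine Set.disjoint_left.2 fun χ hχ ⟨ψ, hψ, _, rfl, hψμ⟩ => hμ ?_
    simpa [← hψμ] using H.sub_mem hχ hψ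
  exact mul_ne_zero hg0 hv0 <| Submodule.disjoint_def.1 (disjoint_eigenSpan hcomm hdisj) _ hgv
    (mul_mem_eigenSpan hδ hg (jointEigenspace_le_eigenSpan (Set.mem_singleton μ) hv))

theorem diagonalLeftIdeal_eigenSpan_lt (hcomm : ∀ i j, Commute (δ i) (δ j))
    {H H' : AddSubgroup (ι → K)} (hHH' : H ≤ H') {μ : ι → K} (hμ : μ ∈ jointEigenvalues hδ)
    (hμH' : μ ∈ H') (hμH : μ ∉ H) :
    diagonalLeftIdeal K (eigenSpan δ H : Set D) < diagonalLeftIdeal K (eigenSpan δ H' : Set D) := by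
  obtain ⟨v, hv0, hv⟩ := hμ
  let E := (eigenSubalgebra hδ H).leftFractions (isLeftOre_eigenSubalgebra hδ H)
  refine SetLike.lt_iff_le_and_exists.2 ⟨diagonalLeftIdeal_mono (eigenSpan_mono hHH'), _,
    tmul_one_sub_one_tmul_mem_diagonalLeftIdeal (jointEigenspace_le_eigenSpan hμH' hv),
    fun hmem => ?_⟩
  obtain ⟨f, hf, hfv⟩ := E.exists_linearMap_of_notMem (fun _ => Subalgebra.inv_mem_leftFractions)
    (notMem_leftFractions_eigenSubalgebra hδ hcomm hμH hv hv0)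
  exact tmul_one_sub_one_tmul_notMem_diagonalLeftIdeal f
    (fun x hx => hf x (Subalgebra.le_leftFractions hx)) hfv hmem

end EigenSpan

/-- Let `D` be a division `K`-algebra with `D ⊗[K] Dᵐᵒᵖ` Noetherian and let
`δ₁, …, δ_t` be pairwise commuting `K`-derivations of `D`.  Then the set of common
eigenvalue tuples is an additive subgroup of `K^t` which is finitely generated. -/
theorem stmt2 (K D : Type*) [Field K] [DivisionRing D] [Algebra K D]
    (hNoeth : IsNoetherianRing (D ⊗[K] Dᵐᵒᵖ))
    (t : ℕ) (δ : Fin t → (D →ₗ[K] D))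
    (hLeib : ∀ i, ∀ a b : D, δ i (a * b) = δ i a * b + a * δ i b)
    (hcomm : ∀ i j, ∀ x : D, δ i (δ j x) = δ j (δ i x)) :
    ∃ G : AddSubgroup (Fin t → K),
      (G : Set (Fin t → K)) =
        {lam : Fin t → K | ∃ u : D, u ≠ 0 ∧ ∀ i, δ i u = lam i • u} ∧
      G.FG := by
  refine ⟨jointEigenvalues hLeib, by ext; simp [jointEigenvalues, mem_jointEigenspace], ?_⟩
  exact (jointEigenvalues hLeib).fg_of_lt_sup_zmultiples
    (fun H => diagonalLeftIdeal K (eigenSpan δ H : Set D)) fun H _ _ μ hμ hμH =>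
      diagonalLeftIdeal_eigenSpan_lt hLeib (fun i j => LinearMap.ext (hcomm i j)) le_sup_left hμ
        (AddSubgroup.mem_sup_right (AddSubgroup.mem_zmultiples μ)) hμH
end

section
/- Let K be a field and D a division K-algebra such that D ⊗_K D^o is a Noetherian ring. Then for every division K-subalgebra Γ of D, the algebra Γ ⊗_K Γ^o is a Noetherian ring. -/
/-!
Let `f : Γ ⊗ Γᵒ → D ⊗ Dᵒ` be the inclusion. Since `D` is a vector space over the division ring `Γ`
on either side, there are `K`-linear retractions `D → Γ` that are right `Γ`-linear, resp. left
`Γ`-linear, and their tensor product is a retraction `π` of `f` with `π (s * f r) = π s * r`.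
Hence `π` recovers a left ideal `I` of `Γ ⊗ Γᵒ` from the left ideal of `D ⊗ Dᵒ` it generates:
`I ↦ (D ⊗ Dᵒ) • f I` is an order embedding, so ascending chains of left ideals stabilise.
-/

open TensorProduct

theorem Ideal.comap_map_of_retraction {R S : Type*} [Ring R] [Ring S] (f : R →+* S)
    (π : S →+ R) (hπ_one : π 1 = 1) (hπ_mul : ∀ s r, π (s * f r) = π s * r) (I : Ideal R) :
    (I.map f).comap f = I := by
  refine le_antisymm (fun x hx => ?_) Ideal.le_comap_map
  have hmem : ∀ y ∈ I.map f, ∀ s, π (s * y) ∈ I := by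
    intro y hy
    induction hy using Submodule.span_induction with
    | mem y hy =>
      obtain ⟨a, ha, rfl⟩ := hy
      exact fun s => hπ_mul s a ▸ I.mul_mem_left _ ha
    | zero => simp
    | add y z _ _ hy hz => exact fun s => by rw [mul_add, map_add]; exact add_mem (hy s) (hz s)
    | smul t y _ hy => exact fun s => by rw [smul_eq_mul, ← mul_assoc]; exact hy (s * t)
  have hπf : π (f x) = x := by simpa [hπ_one] using hπ_mul 1 x
  simpa [hπf] using hmem _ hx 1

theorem IsNoetherianRing.of_retraction {R S : Type*} [Ring R] [Ring S] [IsNoetherianRing S]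
    (f : R →+* S) (π : S →+ R) (hπ_one : π 1 = 1) (hπ_mul : ∀ s r, π (s * f r) = π s * r) :
    IsNoetherianRing R := by
  have hinj : Function.Injective (Ideal.map f : Ideal R → Ideal S) :=
    Function.LeftInverse.injective (g := Ideal.comap f)
      (Ideal.comap_map_of_retraction f π hπ_one hπ_mul)
  have hmono : StrictMono (Ideal.map f : Ideal R → Ideal S) :=
    Monotone.strictMono_of_injective (fun _ _ => Ideal.map_mono) hinj
  exact isNoetherian_mk hmono.wellFoundedGT

theorem RingHom.exists_retraction_mul_right {E B : Type*} [DivisionRing E] [Ring B]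
    [Nontrivial B] (φ : E →+* B) :
    ∃ p : B →+ E, p 1 = 1 ∧ ∀ b e, p (b * φ e) = p b * e := by
  let _ : Module Eᵐᵒᵖ B := Module.compHom B φ.op
  let l : Eᵐᵒᵖ →ₗ[Eᵐᵒᵖ] B := LinearMap.toSpanSingleton Eᵐᵒᵖ B 1
  have hl : ∀ e : E, l (MulOpposite.op e) = φ e := fun e => one_mul (φ e)
  obtain ⟨g, hg⟩ := l.exists_leftInverse_of_injective <| LinearMap.ker_eq_bot.mpr fun a b h => by
    rw [← MulOpposite.op_unop a, ← MulOpposite.op_unop b, hl, hl] at h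
    exact MulOpposite.unop_injective (φ.injective h)
  refine ⟨(MulOpposite.opAddEquiv.symm : Eᵐᵒᵖ ≃+ E).toAddMonoidHom.comp g.toAddMonoidHom, ?_,
    fun b e => ?_⟩
  · have h := LinearMap.congr_fun hg (MulOpposite.op 1)
    rw [LinearMap.comp_apply, hl, map_one] at h
    simpa using congr_arg MulOpposite.unop h
  · have h : g (b * φ e) = MulOpposite.op e * g b := g.map_smul (MulOpposite.op e) b
    simp [h]

theorem AlgHom.exists_retraction_mul_right {K E B : Type*} [CommSemiring K] [DivisionRing E]
    [Ring B] [Nontrivial B] [Algebra K E] [Algebra K B] (φ : E →ₐ[K] B) :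
    ∃ p : B →ₗ[K] E, p 1 = 1 ∧ ∀ b e, p (b * φ e) = p b * e := by
  obtain ⟨p, hp_one, hp_mul⟩ := φ.toRingHom.exists_retraction_mul_right
  refine ⟨{ p with map_smul' := fun k b => ?_ }, hp_one, hp_mul⟩
  calc p (k • b) = p (b * φ (algebraMap K E k)) := by
        rw [φ.commutes, Algebra.smul_def, Algebra.commutes]
    _ = p b * algebraMap K E k := hp_mul b _
    _ = k • p b := by rw [Algebra.smul_def, Algebra.commutes]

theorem TensorProduct.map_mul_map_of_mul_right {K A A' B B' : Type*} [CommSemiring K]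
    [Semiring A] [Semiring A'] [Semiring B] [Semiring B'] [Algebra K A] [Algebra K A']
    [Algebra K B] [Algebra K B'] {f : A →ₐ[K] B} {f' : A' →ₐ[K] B'} {p : B →ₗ[K] A}
    {p' : B' →ₗ[K] A'} (hp : ∀ b a, p (b * f a) = p b * a)
    (hp' : ∀ b a, p' (b * f' a) = p' b * a) (s : B ⊗[K] B') (r : A ⊗[K] A') :
    map p p' (s * Algebra.TensorProduct.map f f' r) = map p p' s * r := by
  induction r using TensorProduct.induction_on with
  | zero => simp
  | add r₁ r₂ h₁ h₂ => simp only [map_add, mul_add, h₁, h₂]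
  | tmul a a' =>
    induction s using TensorProduct.induction_on with
    | zero => simp
    | add s₁ s₂ h₁ h₂ => simp only [map_add, add_mul, h₁, h₂]
    | tmul b b' => simp [hp, hp']

/-- Let `D` be a division `K`-algebra with `D ⊗[K] Dᵐᵒᵖ` a Noetherian ring.
Then for every division `K`-subalgebra `Γ` of `D`, the algebra `Γ ⊗[K] Γᵐᵒᵖ` is a
Noetherian ring. -/
theorem stmt12 (K D : Type*) [Field K] [DivisionRing D] [Algebra K D]
    (hNoeth : IsNoetherianRing (D ⊗[K] Dᵐᵒᵖ))
    (Γ : Subalgebra K D) (hΓ : ∀ x ∈ Γ, x ≠ 0 → x⁻¹ ∈ Γ) :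
    IsNoetherianRing ((↥Γ) ⊗[K] (↥Γ)ᵐᵒᵖ) := by
  let _ : DivisionRing Γ := DivisionRing.ofIsUnitOrEqZero fun x => by
    by_cases hx : (x : D) = 0
    · exact .inr (Subtype.ext hx)
    · exact .inl ⟨⟨x, ⟨_, hΓ x x.2 hx⟩, Subtype.ext (mul_inv_cancel₀ hx),
        Subtype.ext (inv_mul_cancel₀ hx)⟩, rfl⟩
  obtain ⟨p, hp_one, hp_mul⟩ := Γ.val.exists_retraction_mul_right
  obtain ⟨p', hp'_one, hp'_mul⟩ := Γ.val.op.exists_retraction_mul_right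
  exact IsNoetherianRing.of_retraction (Algebra.TensorProduct.map Γ.val Γ.val.op).toRingHom
    (map p p').toAddMonoidHom (by simp [Algebra.TensorProduct.one_def, hp_one, hp'_one])
    (map_mul_map_of_mul_right hp_mul hp'_mul)
end
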